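/- arXiv:math/9909050 — 2 statements merged into one kernel-verified Lean document; each statement's English description precedes it below -/
import Mathlib

section
/- Let a_1, ..., a_n be integers and define w_1 = (a_1), w_k = w_{k-1} ++ (a_k) ++ reverse(-w_{k-1}). Then IF(w_n) = 0 if and only if a_i = 0 for some i with 1 ≤ i ≤ n. -/
/-- Values in ℚ ∪ {∞}, with `none` playing the role of `∞`. -/
abbrev QInf := Option ℚ

/-- Inversion on ℚ ∪ {∞}: 1/0 = ∞, 1/∞ = 0. -/
def qinv : QInf → QInf
  | none => some 0
  | some q => if q = 0 then none else some q⁻¹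

/-- Addition of an integer: k + ∞ = ∞. -/
def qadd (k : ℤ) : QInf → QInf
  | none => none
  | some q => some (q + k)

/-- Iterated fraction of the reversed sequence:
`ifracRev [aₙ, ..., a₁] = IF(a₁,...,aₙ)`. -/
def ifracRev : List ℤ → QInf
  | [] => none
  | x :: rest => qadd x (qinv (ifracRev rest))

/-- The iterated fraction `IF(a₁,...,aₙ)` with values in ℚ ∪ {∞}:
`IF(a₁) = a₁`, `IF(a₁,...,aₙ) = 1/IF(a₁,...,aₙ₋₁) + aₙ`. -/
def ifrac (l : List ℤ) : QInf := ifracRev l.reverse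

/-- The sequences `w₁ = (a₁)`, `wₖ = wₖ₋₁ ++ (aₖ) ++ reverse (-wₖ₋₁)`. -/
def wseq (a : ℕ → ℤ) : ℕ → List ℤ
  | 0 => []
  | k + 1 => wseq a k ++ [a (k + 1)] ++ ((wseq a k).map Neg.neg).reverse

/-- Möbius transformation on `QInf` with rational coefficients. -/
def mob (p q r s : ℚ) : QInf → QInf
  | none => if r = 0 then none else some (p / r)
  | some x => if r * x + s = 0 then none else some ((p * x + q) / (r * x + s))

lemma mob_neg (p q r s : ℚ) (v : QInf) : mob (-p) (-q) (-r) (-s) v = mob p q r s v := by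
  cases v with
  | none => simp [mob, neg_div_neg_eq]
  | some x =>
    simp only [mob]
    rw [show -r * x + -s = -(r * x + s) by ring]
    by_cases h : r * x + s = 0
    · simp [h]
    · simp only [neg_eq_zero, h, if_false]
      rw [show -p * x + -q = -(p * x + q) by ring, neg_div_neg_eq]

lemma mob_comp (p₁ q₁ r₁ s₁ p₂ q₂ r₂ s₂ : ℚ) (h₂ : p₂ * s₂ - q₂ * r₂ ≠ 0) (v : QInf) :
    mob p₁ q₁ r₁ s₁ (mob p₂ q₂ r₂ s₂ v) =
      mob (p₁*p₂ + q₁*r₂) (p₁*q₂ + q₁*s₂) (r₁*p₂ + s₁*r₂) (r₁*q₂ + s₁*s₂) v := by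
  cases v with
  | none =>
    by_cases hr : r₂ = 0
    · have hp : p₂ ≠ 0 := fun h => h₂ (by rw [h, hr]; ring)
      simp only [mob, hr, if_true, mul_zero, add_zero]
      by_cases hr1 : r₁ = 0
      · simp [mob, hr1, hp]
      · have : r₁ * p₂ ≠ 0 := mul_ne_zero hr1 hp
        simp only [mob, hr1, if_false, this, if_false]
        rw [mul_div_mul_right _ _ hp]
    · simp only [mob, hr, if_false]
      have key : r₁ * (p₂ / r₂) + s₁ = (r₁ * p₂ + s₁ * r₂) / r₂ := by
        field_simp
      by_cases hz : r₁ * p₂ + s₁ * r₂ = 0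
      · simp only [mob, key, hz, zero_div, if_true]
      · have : (r₁ * p₂ + s₁ * r₂) / r₂ ≠ 0 := div_ne_zero hz hr
        simp only [mob, key, this, if_false, hz, if_false]
        congr 1
        field_simp
        try ring
  | some x =>
    by_cases hd : r₂ * x + s₂ = 0
    · have hn2 : p₂ * x + q₂ ≠ 0 := by
        intro hn
        apply h₂
        have hs : s₂ = -(r₂ * x) := by linarith
        have hq : q₂ = -(p₂ * x) := by linarith
        rw [hs, hq]; ring
      simp only [mob, hd, if_true]
      have e1 : (r₁*p₂ + s₁*r₂) * x + (r₁*q₂ + s₁*s₂) = r₁ * (p₂ * x + q₂) := by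
        have : s₂ = -(r₂ * x) := by linarith
        rw [this]; ring
      have e2 : (p₁*p₂ + q₁*r₂) * x + (p₁*q₂ + q₁*s₂) = p₁ * (p₂ * x + q₂) := by
        have : s₂ = -(r₂ * x) := by linarith
        rw [this]; ring
      by_cases hr1 : r₁ = 0
      · have h0 : s₁ * r₂ * x + s₁ * s₂ = 0 := by
          rw [hr1] at e1
          linarith
        simp [mob, hr1, h0]
      · have : r₁ * (p₂ * x + q₂) ≠ 0 := mul_ne_zero hr1 hn2
        simp only [mob, hr1, if_false, e1, e2, this, if_false]
        rw [mul_div_mul_right _ _ hn2]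
    · simp only [mob, hd, if_false]
      have key : r₁ * ((p₂ * x + q₂) / (r₂ * x + s₂)) + s₁ =
          ((r₁*p₂ + s₁*r₂) * x + (r₁*q₂ + s₁*s₂)) / (r₂ * x + s₂) := by
        rw [mul_div_assoc', div_add' _ _ _ hd]; ring
      by_cases hz : (r₁*p₂ + s₁*r₂) * x + (r₁*q₂ + s₁*s₂) = 0
      · simp only [mob, key, hz, zero_div, if_true]
      · have hz' : ((r₁*p₂ + s₁*r₂) * x + (r₁*q₂ + s₁*s₂)) / (r₂ * x + s₂) ≠ 0 :=
          div_ne_zero hz hd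
        simp only [mob, key, hz', if_false, hz, if_false]
        congr 1
        rw [mul_div_assoc', div_add' _ _ _ hd, div_div_div_cancel_right₀ hd]
        try ring

/-- Running the iteration starting from an arbitrary value. -/
def gr : List ℤ → QInf → QInf
  | [], v => v
  | x :: xs, v => qadd x (qinv (gr xs v))

lemma gr_append (l₁ l₂ : List ℤ) (v : QInf) : gr (l₁ ++ l₂) v = gr l₁ (gr l₂ v) := by
  induction l₁ with
  | nil => rfl
  | cons x xs ih => simp [gr, ih]

lemma ifracRev_eq_gr (l : List ℤ) : ifracRev l = gr l none := by
  induction l with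
  | nil => rfl
  | cons x xs ih => simp [ifracRev, gr, ih]

lemma gr_single (k : ℤ) (v : QInf) : gr [k] v = mob (k : ℚ) 1 1 0 v := by
  cases v with
  | none => simp [gr, qadd, qinv, mob]
  | some x =>
    by_cases h : x = 0
    · simp [gr, qadd, qinv, mob, h]
    · simp only [gr, qinv, mob, h, if_false, one_mul, add_zero, qadd]
      congr 1
      field_simp
      ring

lemma key (a : ℕ → ℤ) (n : ℕ) :
    ∃ p q r s : ℚ, p * s - q * r ≠ 0 ∧
      (∀ v, gr (wseq a n).reverse v = mob p q r s v) ∧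
      (∀ v, gr ((wseq a n).map Neg.neg) v = mob p (-r) (-q) s v) ∧
      (p = 0 ↔ ∃ i, 1 ≤ i ∧ i ≤ n ∧ a i = 0) := by
  induction n with
  | zero =>
    refine ⟨1, 0, 0, 1, by norm_num, ?_, ?_, ?_⟩
    · intro v
      cases v <;> simp [wseq, gr, mob]
    · intro v
      cases v <;> simp [wseq, gr, mob]
    · simp only [one_ne_zero, false_iff]
      rintro ⟨i, h1, h2, -⟩
      omega
  | succ n ih =>
    obtain ⟨p, q, r, s, hdet, h1, h2, hp⟩ := ih
    set w := wseq a n with hw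
    set A : ℚ := (a (n + 1) : ℚ) with hA
    have mapmap : (w.map Neg.neg).map Neg.neg = w := by
      rw [List.map_map]
      have : (Neg.neg ∘ Neg.neg : ℤ → ℤ) = id := funext fun x => neg_neg x
      rw [this, List.map_id]
    have L1 : (wseq a (n + 1)).reverse = w.map Neg.neg ++ ([a (n + 1)] ++ w.reverse) := by
      simp [wseq, List.reverse_append, ← hw]
    have L2 : (wseq a (n + 1)).map Neg.neg =
        w.map Neg.neg ++ ([-(a (n + 1))] ++ w.reverse) := by
      simp only [wseq, ← hw, List.map_append, List.map_reverse, mapmap]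
      simp
    have hdet2 : (A * p + 1 * r) * (1 * q + 0 * s) - (A * q + 1 * s) * (1 * p + 0 * r) ≠ 0 := by
      intro h
      apply hdet
      linear_combination -h
    refine ⟨A * p ^ 2, A * p * q + (p * s - q * r), (p * s - q * r) - A * p * q,
      -(A * q ^ 2), ?_, ?_, ?_, ?_⟩
    · intro h
      apply mul_ne_zero hdet hdet
      linear_combination -h
    · intro v
      rw [L1, gr_append, gr_append, gr_single, h1, h2,
        mob_comp A 1 1 0 p q r s hdet v,
        mob_comp p (-r) (-q) s _ _ _ _ hdet2 v]
      congr 1 <;> ring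
    · intro v
      have hdet2' : (-A * p + 1 * r) * (1 * q + 0 * s) - (-A * q + 1 * s) * (1 * p + 0 * r) ≠ 0 := by
        intro h
        apply hdet
        linear_combination -h
      rw [L2, gr_append, gr_append, gr_single, h1, h2]
      push_cast
      rw [mob_comp (-A) 1 1 0 p q r s hdet v,
        mob_comp p (-r) (-q) s _ _ _ _ hdet2' v,
        ← mob_neg]
      congr 1 <;> ring
    · rw [mul_eq_zero, pow_eq_zero_iff (two_ne_zero), hA, Int.cast_eq_zero, hp]
      constructor
      · rintro (h | ⟨i, h1, h2, h3⟩)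
        · exact ⟨n + 1, by omega, le_refl _, h⟩
        · exact ⟨i, h1, by omega, h3⟩
      · rintro ⟨i, h1, h2, h3⟩
        rcases eq_or_lt_of_le h2 with h | h
        · exact Or.inl (h ▸ h3)
        · exact Or.inr ⟨i, h1, by omega, h3⟩

theorem stmt_3 (a : ℕ → ℤ) (n : ℕ) (hn : 1 ≤ n) :
    ifrac (wseq a n) = some 0 ↔ ∃ i, 1 ≤ i ∧ i ≤ n ∧ a i = 0 := by
  obtain ⟨p, q, r, s, hdet, h1, _, hp⟩ := key a n
  rw [ifrac, ifracRev_eq_gr, h1]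
  rw [← hp]
  constructor
  · intro h
    by_cases hr : r = 0
    · simp [mob, hr] at h
    · simp only [mob, hr, if_false, Option.some.injEq, div_eq_zero_iff] at h
      tauto
  · intro h
    have hr : r ≠ 0 := by
      intro hr
      apply hdet
      rw [h, hr]; ring
    simp [mob, hr, h]
end

section
/- Let ε_1, ..., ε_n ∈ {−1, +1}, set a_i = 2ε_i, and define w_1 = (a_1), w_k = w_{k-1} ++ (a_k) ++ reverse(-w_{k-1}). Then there exist signs s_1, ..., s_n ∈ {−1, +1} such that IF(w_n) = 2^{2^n − 1} / (∑_{i=1}^{n} s_i · 2^{2^n − 2^i}), viewed as an element of ℚ ∪ {∞}. -/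
/-- Division with values in ℚ ∪ {∞}: division by zero gives ∞. -/
def qdiv (a b : ℚ) : QInf := if b = 0 then none else some (a / b)

namespace IFAux
open Matrix

def M2 (x : ℤ) : Matrix (Fin 2) (Fin 2) ℤ := !![x, 1; 1, 0]
def Dm : Matrix (Fin 2) (Fin 2) ℤ := !![1, 0; 0, -1]

def matRev : List ℤ → Matrix (Fin 2) (Fin 2) ℤ
  | [] => 1
  | x :: t => M2 x * matRev t

lemma matRev_nil : matRev [] = 1 := rfl
lemma matRev_cons (x : ℤ) (t : List ℤ) : matRev (x :: t) = M2 x * matRev t := rfl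

lemma matRev_append (l₁ l₂ : List ℤ) : matRev (l₁ ++ l₂) = matRev l₁ * matRev l₂ := by
  induction l₁ with
  | nil => simp [matRev]
  | cons x t ih => simp [matRev, ih, mul_assoc]

lemma M2_transpose (x : ℤ) : (M2 x)ᵀ = M2 x := by
  ext i j; fin_cases i <;> fin_cases j <;> rfl

lemma matRev_reverse (l : List ℤ) : matRev l.reverse = (matRev l)ᵀ := by
  induction l with
  | nil => simp [matRev]
  | cons x t ih =>
    simp [List.reverse_cons, matRev_append, ih, matRev, Matrix.transpose_mul, M2_transpose]

lemma Dm_mul_Dm : Dm * Dm = 1 := by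
  ext i j; fin_cases i <;> fin_cases j <;>
    simp [Dm, Matrix.mul_apply, Fin.sum_univ_two, Matrix.one_apply]

lemma M2_neg (x : ℤ) : M2 (-x) = -(Dm * M2 x * Dm) := by
  ext i j; fin_cases i <;> fin_cases j <;>
    simp [Dm, M2, Matrix.mul_apply, Fin.sum_univ_two]

lemma matRev_neg (l : List ℤ) :
    matRev (l.map Neg.neg) = ((-1 : ℤ) ^ l.length) • (Dm * matRev l * Dm) := by
  induction l with
  | nil => simp [matRev, Dm_mul_Dm]
  | cons x t ih =>
    have key : Dm * M2 x * Dm * (Dm * matRev t * Dm) = Dm * (M2 x * matRev t) * Dm := by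
      simp only [mul_assoc]
      rw [← mul_assoc Dm Dm (matRev t * Dm), Dm_mul_Dm, one_mul]
    calc matRev ((x :: t).map Neg.neg)
        = M2 (-x) * matRev (t.map Neg.neg) := rfl
      _ = M2 (-x) * (((-1 : ℤ) ^ t.length) • (Dm * matRev t * Dm)) := by rw [ih]
      _ = ((-1 : ℤ) ^ t.length) • (M2 (-x) * (Dm * matRev t * Dm)) := by
          rw [Matrix.mul_smul]
      _ = ((-1 : ℤ) ^ t.length) • (-(Dm * M2 x * Dm * (Dm * matRev t * Dm))) := by
          rw [M2_neg, neg_mul]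
      _ = ((-1 : ℤ) ^ (x :: t).length) • (Dm * matRev (x :: t) * Dm) := by
          rw [key, List.length_cons, pow_succ, mul_smul, matRev_cons]
          simp
  
lemma matRev_det (l : List ℤ) : (matRev l).det = (-1) ^ l.length := by
  induction l with
  | nil => simp [matRev]
  | cons x t ih =>
    rw [matRev_cons, Matrix.det_mul, ih]
    have h : (M2 x).det = -1 := by simp [M2, Matrix.det_fin_two_of]
    rw [h, List.length_cons, pow_succ]; ring

lemma ifracRev_eq (m : List ℤ) :
    ifracRev m = if matRev m 1 0 = 0 then none
      else some ((matRev m 0 0 : ℚ) / (matRev m 1 0 : ℚ)) := by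
  induction m with
  | nil => simp [ifracRev, matRev, Matrix.one_apply]
  | cons x t ih =>
    have hdet : (matRev t).det = (-1) ^ t.length := matRev_det t
    have hne : ¬(matRev t 0 0 = 0 ∧ matRev t 1 0 = 0) := by
      rintro ⟨h1, h2⟩
      rw [Matrix.det_fin_two, h1, h2] at hdet
      simp at hdet
      exact (pow_ne_zero t.length (by norm_num : (-1 : ℤ) ≠ 0)) hdet.symm
    have e00 : matRev (x :: t) 0 0 = x * matRev t 0 0 + matRev t 1 0 := by
      rw [matRev_cons]; simp [M2, Matrix.mul_apply, Fin.sum_univ_two]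
    have e10 : matRev (x :: t) 1 0 = matRev t 0 0 := by
      rw [matRev_cons]; simp [M2, Matrix.mul_apply, Fin.sum_univ_two]
    rw [show ifracRev (x :: t) = qadd x (qinv (ifracRev t)) from rfl, ih, e00, e10]
    by_cases hr : matRev t 1 0 = 0
    · have hp : matRev t 0 0 ≠ 0 := fun h => hne ⟨h, hr⟩
      have hpQ : (matRev t 0 0 : ℚ) ≠ 0 := Int.cast_ne_zero.mpr hp
      simp only [hr, if_pos rfl, if_neg hp, qinv, qadd]
      push_cast
      field_simp
      rw [add_zero, zero_add, mul_div_cancel_right₀ _ hpQ]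
    · by_cases hp : matRev t 0 0 = 0
      · simp only [if_neg hr, hp, qinv, qadd]
        norm_num
      · have hpQ : (matRev t 0 0 : ℚ) ≠ 0 := Int.cast_ne_zero.mpr hp
        have hrQ : (matRev t 1 0 : ℚ) ≠ 0 := Int.cast_ne_zero.mpr hr
        have hdiv : (matRev t 0 0 : ℚ) / (matRev t 1 0 : ℚ) ≠ 0 := div_ne_zero hpQ hrQ
        simp only [if_neg hr, if_neg hp, qinv, qadd, if_neg hdiv]
        congr 1
        rw [inv_div]
        push_cast
        field_simp
        ring

lemma wseq_length (a : ℕ → ℤ) (n : ℕ) : (wseq a n).length = 2 ^ n - 1 := by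
  induction n with
  | zero => simp [wseq]
  | succ k ih =>
    have h1 : 0 < 2 ^ k := Nat.two_pow_pos k
    simp only [wseq, List.length_append, List.length_reverse, List.length_map, ih,
      List.length_singleton]
    rw [pow_succ]
    omega

end IFAux

namespace IFAux
open Matrix Finset

lemma key (ε : ℕ → ℤ) (hε : ∀ i, ε i = 1 ∨ ε i = -1) :
    ∀ n, 1 ≤ n → ∃ (σ : ℤ) (s : ℕ → ℤ) (r S : ℤ),
      (σ = 1 ∨ σ = -1) ∧ (∀ i, s i = 1 ∨ s i = -1) ∧ s n = 1 ∧
      matRev ((wseq (fun i => 2 * ε i) n).reverse)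
        = !![σ * 2 ^ (2 ^ n - 1), 2 - r; r, S] ∧
      σ * 2 ^ (2 ^ n - 1) * S - (2 - r) * r = -1 ∧
      r = ∑ i ∈ Finset.Icc 1 n, s i * 2 ^ (2 ^ n - 2 ^ i) := by
  intro n hn
  induction n, hn using Nat.le_induction with
  | base =>
    refine ⟨ε 1, fun _ => 1, 1, 0, hε 1, fun _ => Or.inl rfl, rfl, ?_, by norm_num, ?_⟩
    · have h1 : (wseq (fun i => 2 * ε i) 1).reverse = [2 * ε 1] := by simp [wseq]
      rw [h1, matRev_cons, matRev_nil, mul_one]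
      ext i j
      fin_cases i <;> fin_cases j <;> simp [M2] <;> ring
    · simp
  | succ k hk ih =>
    obtain ⟨σ, s, r, S, hσ, hs, hsk, hmat, hdet, hr⟩ := ih
    set a : ℕ → ℤ := fun i => 2 * ε i with ha
    have haval : a (k + 1) = 2 * ε (k + 1) := rfl
    set p : ℤ := σ * 2 ^ (2 ^ k - 1) with hp
    have hσ2 : σ * σ = 1 := by rcases hσ with h | h <;> rw [h] <;> norm_num
    have h2k : 0 < 2 ^ k := Nat.two_pow_pos k
    have h2k1 : 2 ^ (k + 1) = 2 * 2 ^ k := by rw [pow_succ]; ring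
    have h2k' : 2 ^ k = 2 * 2 ^ (k - 1) := by
      conv_lhs => rw [show k = (k - 1) + 1 from by omega]
      rw [pow_succ]; ring
    have h2km : 0 < 2 ^ (k - 1) := Nat.two_pow_pos _
    have hoddpow : (-1 : ℤ) ^ (2 ^ k - 1) = -1 :=
      Odd.neg_one_pow (Nat.odd_iff.mpr (by omega))
    have hw : (wseq a (k + 1)).reverse
        = ((wseq a k).map Neg.neg) ++ (a (k + 1) :: (wseq a k).reverse) := by
      simp [wseq]
    have hT : (!![p, 2 - r; r, S])ᵀ = !![p, r; 2 - r, S] := by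
      ext i j; fin_cases i <;> fin_cases j <;> rfl
    have hmw : matRev (wseq a k) = (!![p, 2 - r; r, S])ᵀ := by
      rw [← Matrix.transpose_transpose (matRev (wseq a k)), ← matRev_reverse, hmat]
    have hB : matRev ((wseq a (k + 1)).reverse)
        = -(Dm * (!![p, 2 - r; r, S])ᵀ * Dm) * (M2 (a (k + 1)) * !![p, 2 - r; r, S]) := by
      rw [hw, matRev_append, matRev_cons, matRev_neg, hmw, hmat, wseq_length, hoddpow,
        neg_one_smul]
    set r' : ℤ := 1 + a (k + 1) * p * (2 - r) with hr'
    have hmat' : matRev ((wseq a (k + 1)).reverse)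
        = !![-(a (k + 1) * p * p), 2 - r'; r', a (k + 1) * (2 - r) ^ 2] := by
      have hdetx : σ * 2 ^ (2 ^ k - 1) * S - (2 - r) * r = -1 := by rw [← hp]; exact hdet
      rw [hB, hT]
      ext i j
      fin_cases i <;> fin_cases j <;>
        simp [M2, Dm, Matrix.mul_apply, Fin.sum_univ_two, Matrix.transpose_apply, hr', hp] <;>
        first
          | ring1
          | linear_combination hdetx
          | linear_combination -hdetx
    have hp' : -(a (k + 1) * p * p) = -(ε (k + 1)) * 2 ^ (2 ^ (k + 1) - 1) := by
      have he : 2 ^ (k + 1) - 1 = (2 ^ k - 1) + (2 ^ k - 1) + 1 := by omega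
      rw [he, hp, haval, pow_add, pow_add, pow_one]
      linear_combination (-2 * ε (k + 1) * 2 ^ (2 ^ k - 1) * 2 ^ (2 ^ k - 1)) * hσ2
    have hdet' : -(ε (k + 1)) * 2 ^ (2 ^ (k + 1) - 1) * (a (k + 1) * (2 - r) ^ 2)
        - (2 - r') * r' = -1 := by
      rw [← hp', hr']
      ring
    set s' : ℕ → ℤ :=
      fun i => if i = k + 1 then 1 else if i = k then ε (k + 1) * σ
        else -(ε (k + 1)) * σ * s i with hs'def
    have hs'top : s' (k + 1) = 1 := by simp [hs'def]
    have hs'k : s' k = ε (k + 1) * σ := by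
      simp only [hs'def]
      rw [if_neg (show ¬ k = k + 1 by omega)]
      simp
    have hs'other : ∀ i, i ≠ k + 1 → i ≠ k → s' i = -(ε (k + 1)) * σ * s i := by
      intro i h1 h2; simp only [hs'def, if_neg h1, if_neg h2]
    have hexp : ∀ i ∈ Finset.Icc 1 k,
        (2 : ℤ) ^ (2 ^ (k + 1) - 2 ^ i) = 2 ^ (2 ^ k) * 2 ^ (2 ^ k - 2 ^ i) := by
      intro i hi
      rw [← pow_add]
      congr 1
      rw [Finset.mem_Icc] at hi
      have : 2 ^ i ≤ 2 ^ k := Nat.pow_le_pow_right (by norm_num) hi.2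
      omega
    have hsum0 : ∑ i ∈ Finset.Icc 1 k,
        (s' i * 2 ^ (2 ^ (k + 1) - 2 ^ i)
          + ε (k + 1) * σ * 2 ^ (2 ^ k) * (s i * 2 ^ (2 ^ k - 2 ^ i)))
        = ε (k + 1) * σ * 2 ^ (2 ^ k) * 2 := by
      rw [Finset.sum_eq_single_of_mem k (Finset.mem_Icc.mpr ⟨hk, le_refl k⟩)]
      · rw [hs'k, hsk, hexp k (Finset.mem_Icc.mpr ⟨hk, le_refl k⟩),
          show 2 ^ k - 2 ^ k = 0 from by omega, pow_zero]
        ring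
      · intro b hb hbk
        rw [Finset.mem_Icc] at hb
        rw [hs'other b (by omega) hbk, hexp b (Finset.mem_Icc.mpr hb)]
        ring
    rw [Finset.sum_add_distrib] at hsum0
    have hcr : ∑ i ∈ Finset.Icc 1 k,
        ε (k + 1) * σ * 2 ^ (2 ^ k) * (s i * 2 ^ (2 ^ k - 2 ^ i))
        = ε (k + 1) * σ * 2 ^ (2 ^ k) * r := by
      rw [← Finset.mul_sum, ← hr]
    have hfin : ∑ i ∈ Finset.Icc 1 k, s' i * 2 ^ (2 ^ (k + 1) - 2 ^ i)
        = ε (k + 1) * σ * 2 ^ (2 ^ k) * 2 - ε (k + 1) * σ * 2 ^ (2 ^ k) * r := by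
      linarith [hsum0, hcr]
    have hpow2 : (2 : ℤ) * 2 ^ (2 ^ k - 1) = 2 ^ (2 ^ k) := by
      rw [← pow_succ']
      congr 1
      omega
    have hr'eq : r' = 1 + ε (k + 1) * σ * 2 ^ (2 ^ k) * (2 - r) := by
      rw [hr', haval, hp]
      linear_combination (ε (k + 1) * σ * (2 - r)) * hpow2
    refine ⟨-(ε (k + 1)), s', r', a (k + 1) * (2 - r) ^ 2, ?_, ?_, hs'top, ?_, hdet', ?_⟩
    · rcases hε (k + 1) with h | h <;> rw [h] <;> norm_num
    · intro i
      simp only [hs'def]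
      split_ifs with h1 h2
      · exact Or.inl rfl
      · rcases hε (k + 1) with h | h <;> rcases hσ with h' | h' <;> rw [h, h'] <;> norm_num
      · rcases hε (k + 1) with h | h <;> rcases hσ with h' | h' <;>
          rcases hs i with h'' | h'' <;> rw [h, h', h''] <;> norm_num
    · rw [hmat', hp']
    · rw [Finset.sum_Icc_succ_top (by omega : 1 ≤ k + 1), hs'top,
        show 2 ^ (k + 1) - 2 ^ (k + 1) = 0 from by omega, pow_zero, hfin, hr'eq]
      ring

end IFAux
theorem stmt_10 (n : ℕ) (hn : 1 ≤ n) (ε : ℕ → ℤ)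
    (hε : ∀ i, ε i = 1 ∨ ε i = -1) :
    ∃ s : ℕ → ℤ, (∀ i, s i = 1 ∨ s i = -1) ∧
      ifrac (wseq (fun i => 2 * ε i) n)
        = qdiv (2 ^ (2 ^ n - 1))
            (∑ i ∈ Finset.Icc 1 n, (s i : ℚ) * 2 ^ (2 ^ n - 2 ^ i)) := by
  obtain ⟨σ, s, r, S, hσ, hs, hsn, hmat, hdet, hr⟩ := IFAux.key ε hε n hn
  have h2n : 0 < 2 ^ n := Nat.two_pow_pos n
  have h2n2 : 2 ≤ 2 ^ n := by
    calc 2 = 2 ^ 1 := rfl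
      _ ≤ 2 ^ n := Nat.pow_le_pow_right (by norm_num) hn
  have hrne : r ≠ 0 := by
    intro h0
    rw [h0] at hdet
    have hps : σ * 2 ^ (2 ^ n - 1) * S = -1 := by linear_combination hdet
    have hsplit : σ * 2 ^ (2 ^ n - 1) * S = 2 * (σ * 2 ^ (2 ^ n - 2) * S) := by
      rw [show 2 ^ n - 1 = (2 ^ n - 2) + 1 from by omega, pow_succ]
      ring
    rw [hsplit] at hps
    obtain ⟨m, hm⟩ : ∃ m, σ * 2 ^ (2 ^ n - 2) * S = m := ⟨_, rfl⟩
    rw [hm] at hps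
    omega
  have hσQ : (σ : ℚ) * σ = 1 := by rcases hσ with h | h <;> rw [h] <;> norm_num
  have hσne : (σ : ℚ) ≠ 0 := by rcases hσ with h | h <;> rw [h] <;> norm_num
  have hrQ : (r : ℚ) ≠ 0 := Int.cast_ne_zero.mpr hrne
  refine ⟨fun i => σ * s i, ?_, ?_⟩
  · intro i
    rcases hσ with h | h <;> rcases hs i with h' | h' <;> simp [h, h']
  · have e10 : IFAux.matRev ((wseq (fun i => 2 * ε i) n).reverse) 1 0 = r := by
      rw [hmat]; simp
    have e00 : IFAux.matRev ((wseq (fun i => 2 * ε i) n).reverse) 0 0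
        = σ * 2 ^ (2 ^ n - 1) := by
      rw [hmat]; simp
    rw [show ifrac (wseq (fun i => 2 * ε i) n)
          = ifracRev ((wseq (fun i => 2 * ε i) n).reverse) from rfl,
      IFAux.ifracRev_eq, e10, e00, if_neg hrne]
    have hden : ∑ i ∈ Finset.Icc 1 n, ((σ * s i : ℤ) : ℚ) * 2 ^ (2 ^ n - 2 ^ i)
        = (σ : ℚ) * r := by
      rw [hr]
      push_cast
      rw [Finset.mul_sum]
      apply Finset.sum_congr rfl
      intro i _
      ring
    have hdne : (σ : ℚ) * r ≠ 0 := mul_ne_zero hσne hrQ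
    simp only [hden]
    rw [qdiv, if_neg hdne]
    congr 1
    rw [div_eq_div_iff hrQ hdne]
    push_cast
    linear_combination ((2 : ℚ) ^ (2 ^ n - 1) * (r : ℚ)) * hσQ
end
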